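/- Let A be a commutative ring with a multiplicative seminorm |·|_x bounded by 1, and let p = {a : |a|_x = 0} and q = {a : |a|_x < 1} (so p ⊆ q are a prime ideal and an ideal respectively). For t ∈ [0,∞], define L(t) : A → ℝ by L(0) = the trivial seminorm with kernel p (L(0)(a) = 0 if a ∈ p, 1 otherwise), L(t)(a) = |a|_x^t for t ∈ (0,∞), and L(∞) = the trivial seminorm with kernel q. Then each L(t) is a multiplicative seminorm on A, and the map t ↦ L(t) is continuous in the topology of pointwise convergence on A, i.e. for each a ∈ A the function t ↦ L(t)(a) is continuous on [0,∞]. -/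

import Mathlib

open scoped ENNReal Classical

def IsMultSeminorm {A : Type*} [CommRing A] (f : A → ℝ) : Prop :=
  f 0 = 0 ∧ f 1 = 1 ∧ (∀ x y, f (x * y) = f x * f y) ∧
    (∀ x y, f (x + y) ≤ f x + f y) ∧ ∀ x, 0 ≤ f x

open Filter Topology Finset

/-!
A multiplicative seminorm bounded by `1` is non-archimedean: expanding `(x + y) ^ n` by the
binomial theorem gives `|x + y| ^ n ≤ (n + 1) max(|x|, |y|) ^ n` (the binomial coefficients have
norm at most `1`), and `n + 1` grows subexponentially. Hence `|·| ^ t` is again a multiplicative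
seminorm for every `t > 0`, while the ends of the family are the trivial seminorms attached to the
prime ideals `{|a| = 0}` and `{|a| < 1}`. Continuity in `t` is a statement about the single real
function `t ↦ c ^ t` for `c ∈ [0, 1]`.
-/

lemma le_of_pow_le_succ_mul_pow {a b : ℝ} (hb : 0 ≤ b)
    (h : ∀ n : ℕ, a ^ n ≤ (n + 1) * b ^ n) : a ≤ b := by
  by_contra! hab
  have ha : 0 < a := hb.trans_lt hab
  have hr0 : 0 ≤ b / a := div_nonneg hb ha.le
  have hr1 : b / a < 1 := (div_lt_one ha).2 hab
  have hlim : Tendsto (fun n : ℕ => ((n : ℝ) + 1) * (b / a) ^ n) atTop (𝓝 0) := by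
    simpa [add_mul] using (tendsto_self_mul_const_pow_of_lt_one hr0 hr1).add
      (tendsto_pow_atTop_nhds_zero_of_lt_one hr0 hr1)
  have hone : ∀ n : ℕ, 1 ≤ ((n : ℝ) + 1) * (b / a) ^ n := fun n => by
    rw [div_pow, mul_div_assoc', le_div_iff₀ (pow_pos ha n), one_mul]
    exact h n
  exact absurd (ge_of_tendsto' hlim hone) (by norm_num)

lemma ENNReal.tendsto_toReal_nhdsNE_top : Tendsto ENNReal.toReal (𝓝[≠] ∞) atTop := by
  refine tendsto_atTop.2 fun b => ?_
  filter_upwards [nhdsWithin_le_nhds (Ioi_mem_nhds (ENNReal.ofReal_lt_top (r := b))),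
    self_mem_nhdsWithin] with t hbt ht
  exact (ENNReal.ofReal_le_iff_le_toReal ht).1 (le_of_lt hbt)

namespace IsMultSeminorm

variable {A : Type*} [CommRing A] {f : A → ℝ}

lemma map_zero (hf : IsMultSeminorm f) : f 0 = 0 := hf.1

lemma map_one (hf : IsMultSeminorm f) : f 1 = 1 := hf.2.1

lemma map_mul (hf : IsMultSeminorm f) (x y : A) : f (x * y) = f x * f y := hf.2.2.1 x y

lemma map_add_le (hf : IsMultSeminorm f) (x y : A) : f (x + y) ≤ f x + f y := hf.2.2.2.1 x y

lemma nonneg (hf : IsMultSeminorm f) (x : A) : 0 ≤ f x := hf.2.2.2.2 x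

lemma map_pow (hf : IsMultSeminorm f) (x : A) (n : ℕ) : f (x ^ n) = f x ^ n := by
  induction n with
  | zero => simpa using hf.map_one
  | succ n ih => rw [pow_succ, hf.map_mul, ih, pow_succ]

lemma pow_map_add_le (hf : IsMultSeminorm f) (hb : ∀ a, f a ≤ 1) (x y : A) (n : ℕ) :
    f (x + y) ^ n ≤ (n + 1) * max (f x) (f y) ^ n := by
  set m := max (f x) (f y)
  have hterm : ∀ k ∈ range (n + 1), f (x ^ k * y ^ (n - k) * n.choose k) ≤ m ^ n := by
    intro k hk
    rw [hf.map_mul, hf.map_mul, hf.map_pow, hf.map_pow]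
    calc f x ^ k * f y ^ (n - k) * f (n.choose k)
        ≤ m ^ k * m ^ (n - k) * 1 := by
          have := hf.nonneg x; have := hf.nonneg y; have := hf.nonneg (n.choose k : A)
          gcongr
          exacts [le_max_left (f x) (f y), le_max_right (f x) (f y), hb _]
      _ = m ^ n := by rw [mul_one, ← pow_add, Nat.add_sub_cancel' (mem_range_succ_iff.1 hk)]
  calc f (x + y) ^ n = f ((x + y) ^ n) := (hf.map_pow _ _).symm
    _ ≤ ∑ k ∈ range (n + 1), f (x ^ k * y ^ (n - k) * n.choose k) := by
      rw [add_pow]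
      exact le_sum_of_subadditive f hf.map_zero.le hf.map_add_le _ _
    _ ≤ ∑ _k ∈ range (n + 1), m ^ n := sum_le_sum hterm
    _ = (n + 1) * m ^ n := by simp

lemma isNonarchimedean (hf : IsMultSeminorm f) (hb : ∀ a, f a ≤ 1) : IsNonarchimedean f :=
  fun x y => le_of_pow_le_succ_mul_pow (le_max_of_le_left (hf.nonneg x)) (hf.pow_map_add_le hb x y)

lemma rpow (hf : IsMultSeminorm f) (hna : IsNonarchimedean f) {t : ℝ} (ht : 0 < t) :
    IsMultSeminorm fun a => f a ^ t := by
  refine ⟨by simp [hf.map_zero, ht.ne'], by simp [hf.map_one], fun x y => ?_, fun x y => ?_,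
    fun x => Real.rpow_nonneg (hf.nonneg x) t⟩
  · simp only [hf.map_mul, Real.mul_rpow (hf.nonneg x) (hf.nonneg y)]
  · rcases le_max_iff.1 (hna x y) with h | h
    · exact (Real.rpow_le_rpow (hf.nonneg _) h ht.le).trans
        (le_add_of_nonneg_right (Real.rpow_nonneg (hf.nonneg y) t))
    · exact (Real.rpow_le_rpow (hf.nonneg _) h ht.le).trans
        (le_add_of_nonneg_left (Real.rpow_nonneg (hf.nonneg x) t))

def kerIdeal (hf : IsMultSeminorm f) : Ideal A where
  carrier := {a | f a = 0}
  zero_mem' := hf.map_zero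
  add_mem' {a b} (ha : f a = 0) (hb : f b = 0) :=
    le_antisymm ((hf.map_add_le a b).trans_eq (by rw [ha, hb, add_zero])) (hf.nonneg _)
  smul_mem' c a (ha : f a = 0) := show f (c * a) = 0 by rw [hf.map_mul, ha, mul_zero]

lemma mem_kerIdeal (hf : IsMultSeminorm f) {a : A} : a ∈ hf.kerIdeal ↔ f a = 0 := Iff.rfl

instance (hf : IsMultSeminorm f) : hf.kerIdeal.IsPrime := by
  refine Ideal.isPrime_iff.2 ⟨(Ideal.ne_top_iff_one _).2 ?_, fun {x y} hxy => ?_⟩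
  · simp [mem_kerIdeal, hf.map_one]
  · simpa only [mem_kerIdeal, hf.map_mul, mul_eq_zero] using hxy

def ltOneIdeal (hf : IsMultSeminorm f) (hb : ∀ a, f a ≤ 1) : Ideal A where
  carrier := {a | f a < 1}
  zero_mem' := by simp [hf.map_zero]
  add_mem' {a b} ha hb' := (hf.isNonarchimedean hb a b).trans_lt (max_lt ha hb')
  smul_mem' c a (ha : f a < 1) := show f (c * a) < 1 by
    rw [hf.map_mul]
    exact (mul_le_of_le_one_left (hf.nonneg a) (hb c)).trans_lt ha

lemma mem_ltOneIdeal (hf : IsMultSeminorm f) (hb : ∀ a, f a ≤ 1) {a : A} :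
    a ∈ hf.ltOneIdeal hb ↔ f a < 1 := Iff.rfl

instance (hf : IsMultSeminorm f) (hb : ∀ a, f a ≤ 1) : (hf.ltOneIdeal hb).IsPrime := by
  refine Ideal.isPrime_iff.2 ⟨(Ideal.ne_top_iff_one _).2 ?_, fun {x y} hxy => ?_⟩
  · simp [mem_ltOneIdeal, hf.map_one]
  · simp only [mem_ltOneIdeal, hf.map_mul] at hxy ⊢
    by_contra! h
    exact (one_le_mul_of_one_le_of_one_le h.1 h.2).not_gt hxy

end IsMultSeminorm

lemma isMultSeminorm_ite_mem {A : Type*} [CommRing A] (P : Ideal A) [hP : P.IsPrime] :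
    IsMultSeminorm fun a => if a ∈ P then (0 : ℝ) else 1 := by
  refine ⟨by simp [P.zero_mem], by simp [(Ideal.ne_top_iff_one P).1 hP.ne_top],
    fun x y => ?_, fun x y => ?_, fun x => by dsimp only; split_ifs <;> norm_num⟩
  · by_cases hx : x ∈ P <;> by_cases hy : y ∈ P <;> simp [hP.mul_mem_iff_mem_or_mem, hx, hy]
  · dsimp only
    split_ifs with hxy hx hy <;> norm_num
    exact hxy (P.add_mem ‹_› ‹_›)

/-- The continuous extension to `t ∈ [0, ∞]` of `t ↦ c ^ t` on `(0, ∞)`, for `0 ≤ c ≤ 1`. -/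
noncomputable def extendedRpow (c : ℝ) (t : ℝ≥0∞) : ℝ :=
  if t = 0 then (if c = 0 then 0 else 1)
  else if t = ⊤ then (if c < 1 then 0 else 1)
  else c ^ t.toReal

lemma extendedRpow_zero_left : extendedRpow 0 = 0 := by
  ext t
  by_cases h0 : t = 0 <;> by_cases htop : t = ⊤ <;>
    simp [extendedRpow, h0, htop, Real.zero_rpow, ENNReal.toReal_eq_zero_iff]

lemma extendedRpow_one_left : extendedRpow 1 = 1 := by
  ext t
  simp [extendedRpow]

lemma extendedRpow_of_ne_top {c : ℝ} (hc : c ≠ 0) {t : ℝ≥0∞} (ht : t ≠ ⊤) :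
    extendedRpow c t = c ^ t.toReal := by
  by_cases h0 : t = 0 <;> simp [extendedRpow, h0, hc, ht]

lemma extendedRpow_top_of_lt_one {c : ℝ} (hc : c < 1) : extendedRpow c ⊤ = 0 := by
  simp [extendedRpow, hc]

lemma continuous_extendedRpow {c : ℝ} (h0 : 0 ≤ c) (h1 : c ≤ 1) : Continuous (extendedRpow c) := by
  rcases h0.eq_or_lt with rfl | hc0
  · rw [extendedRpow_zero_left]; exact continuous_const
  rcases h1.lt_or_eq with hc1 | rfl
  swap
  · rw [extendedRpow_one_left]; exact continuous_const
  refine continuous_iff_continuousAt.2 fun t => ?_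
  by_cases ht : t = ⊤
  · subst ht
    refine continuousWithinAt_compl_self.1 ?_
    rw [ContinuousWithinAt, extendedRpow_top_of_lt_one hc1]
    refine ((tendsto_rpow_atTop_of_base_lt_one c (by linarith) hc1).comp
      ENNReal.tendsto_toReal_nhdsNE_top).congr' ?_
    filter_upwards [self_mem_nhdsWithin] with s hs
    exact (extendedRpow_of_ne_top hc0.ne' hs).symm
  · refine ((Real.continuousAt_const_rpow hc0.ne').comp (ENNReal.tendsto_toReal ht)).congr ?_
    filter_upwards [isOpen_ne.mem_nhds ht] with s hs
    exact (extendedRpow_of_ne_top hc0.ne' hs).symm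

lemma isMultSeminorm_extendedRpow {A : Type*} [CommRing A] {f : A → ℝ} (hf : IsMultSeminorm f)
    (hb : ∀ a, f a ≤ 1) (t : ℝ≥0∞) : IsMultSeminorm fun a => extendedRpow (f a) t := by
  by_cases h0 : t = 0
  · convert isMultSeminorm_ite_mem hf.kerIdeal using 2 with a
    simp [extendedRpow, h0, hf.mem_kerIdeal]
  by_cases htop : t = ⊤
  · convert isMultSeminorm_ite_mem (hf.ltOneIdeal hb) using 2 with a
    simp [extendedRpow, htop, hf.mem_ltOneIdeal]
  · convert hf.rpow (hf.isNonarchimedean hb) (ENNReal.toReal_pos h0 htop) using 2 with a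
    simp [extendedRpow, h0, htop]

/-- for a multiplicative seminorm `|·|_x ≤ 1` on `A`, the family
`L(0) = ` trivial seminorm with kernel `{|·|_x = 0}`, `L(t) = |·|_x^t` for `t ∈ (0,∞)`,
`L(∞) = ` trivial seminorm with kernel `{|·|_x < 1}`, consists of multiplicative
seminorms, and for each `a ∈ A` the map `t ↦ L(t)(a)` is continuous on `[0,∞]`. -/
theorem stmt_5 {A : Type*} [CommRing A] (fx : A → ℝ)
    (hx : IsMultSeminorm fx) (hb : ∀ a, fx a ≤ 1)
    (L : ℝ≥0∞ → A → ℝ)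
    (hL : ∀ t a, L t a =
      if t = 0 then (if fx a = 0 then 0 else 1)
      else if t = ⊤ then (if fx a < 1 then 0 else 1)
      else fx a ^ t.toReal) :
    (∀ t, IsMultSeminorm (L t)) ∧ ∀ a, Continuous fun t => L t a := by
  obtain rfl : L = fun t a => extendedRpow (fx a) t := funext fun t => funext (hL t)
  exact ⟨isMultSeminorm_extendedRpow hx hb, fun a => continuous_extendedRpow (hx.nonneg a) (hb a)⟩
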